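/- Let a_j(n) (1 ≤ j ≤ R) be complex coefficients supported on finite sets S_j of positive integers that are pairwise coprime (every element of S_i is coprime to every element of S_j for i ≠ j), and suppose every product n₁⋯n_R with n_j ∈ S_j is at most N where N = o(T). Then (1/T) ∫_T^{2T} ∏_{j=1}^R |∑_{n ∈ S_j} a_j(n) n^{-it}|² dt = (1 + O(N/T))^{1−R} ∏_{j=1}^R ((1/T) ∫_T^{2T} |∑_{n ∈ S_j} a_j(n) n^{-it}|² dt). -/

import Mathlib

/-!
Expanding `|∑ a(n) n^{-it}|²` gives the diagonal `∑ |a(n)|²` plus oscillating terms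
`a(m) conj(a(n)) (n/m)^{it}`. Averaging over the shifted windows `[T - N + u, 2T + u]` (which
contain `[T, 2T]`) and `[T + u, 2T - N + u]` (which lie inside it), `0 ≤ u ≤ N`, turns each
oscillating term into a product of two exponential integrals, of size `≤ 4 / log(n/m)²
≤ 4 N² / (n - m)²`; Schur's test with `∑_{k ≠ 0} 1/k² ≤ 4` bounds their total by
`16 N² ∑ |a(n)|²`. This is the mean value theorem `∫_T^{2T} |A|² = (T + O(N)) ∑ |a(n)|²`.

With pairwise coprime supports, `∏_j A_j` is the Dirichlet polynomial with coefficient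
`∏_j a_j(n_j)` at `n₁⋯n_R`, because such factorizations are unique; its coefficient mass is
`∏_j ∑ |a_j(n)|²`, so the mean value theorems for the product and for the factors differ by a
factor `(1 + O(N/T))^{R-1}`.
-/

open intervalIntegral Complex Finset ComplexConjugate

noncomputable def expIntegral (l α β : ℝ) : ℂ := ∫ t in α..β, cexp (l * I * t)

lemma expIntegral_zero (α β : ℝ) : expIntegral 0 α β = β - α := by
  simp [expIntegral]

lemma norm_expIntegral_le {l : ℝ} (hl : l ≠ 0) (α β : ℝ) : ‖expIntegral l α β‖ ≤ 2 / |l| := by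
  have hlI : (l : ℂ) * I ≠ 0 := mul_ne_zero (ofReal_ne_zero.mpr hl) I_ne_zero
  have hexp : ∀ x : ℝ, ‖cexp (l * I * x)‖ = 1 := fun x => by
    simpa [mul_right_comm] using norm_exp_ofReal_mul_I (l * x)
  rw [expIntegral, integral_exp_mul_complex hlI, norm_div]
  simp only [norm_mul, norm_real, Real.norm_eq_abs, norm_I, mul_one]
  gcongr
  exact (norm_sub_le _ _).trans (by rw [hexp, hexp]; norm_num)

lemma expIntegral_add_right (l α β u : ℝ) :
    expIntegral l (α + u) (β + u) = cexp (l * I * u) * expIntegral l α β := by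
  rw [expIntegral, expIntegral, ← integral_comp_add_right, ← integral_const_mul]
  congr 1 with t
  rw [← Complex.exp_add]; push_cast; ring_nf

lemma integral_sum_mul_exp {ι : Type*} (s : Finset ι) (c : ι → ℂ) (l : ι → ℝ) (α β : ℝ) :
    ∫ t in α..β, ∑ p ∈ s, c p * cexp (l p * I * t) = ∑ p ∈ s, c p * expIntegral (l p) α β := by
  rw [integral_finsetSum fun p _ => (by fun_prop : Continuous _).intervalIntegrable _ _]
  simp only [integral_const_mul, expIntegral]

lemma integral_re_eq_re_integral {f : ℝ → ℂ} {α β : ℝ} (hf : Continuous f) :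
    ∫ t in α..β, (f t).re = (∫ t in α..β, f t).re :=
  reCLM.intervalIntegral_comp_comm (hf.intervalIntegrable _ _)

section DirichletPolynomial

variable {ι : Type*} {s : Finset ι} {ν : ι → ℕ} {a : ι → ℂ}

/-- Indexing the terms by `s` through `ν` (rather than by a support in `ℕ`) lets a product of
Dirichlet polynomials be written as one, indexed by tuples of terms. -/
noncomputable def dirichletPoly (s : Finset ι) (ν : ι → ℕ) (a : ι → ℂ) (t : ℝ) : ℂ :=
  ∑ i ∈ s, a i * (ν i : ℂ) ^ (-(I * t))

noncomputable def logGap (ν : ι → ℕ) (p : ι × ι) : ℝ := Real.log (ν p.2) - Real.log (ν p.1)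

lemma natCast_cpow_mul_conj {m n : ℕ} (hm : m ≠ 0) (hn : n ≠ 0) (t : ℝ) :
    (m : ℂ) ^ (-(I * t)) * conj ((n : ℂ) ^ (-(I * t)))
      = cexp ((Real.log n - Real.log m : ℝ) * I * t) := by
  rw [cpow_def_of_ne_zero (by exact_mod_cast hm), cpow_def_of_ne_zero (by exact_mod_cast hn),
    ← natCast_log, ← natCast_log, ← exp_conj, ← Complex.exp_add]
  congr 1
  simp only [map_mul, map_neg, conj_ofReal, conj_I, ofReal_sub]
  ring

lemma norm_dirichletPoly_sq (hν : ∀ i ∈ s, ν i ≠ 0) (t : ℝ) :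
    ‖dirichletPoly s ν a t‖ ^ 2
      = (∑ p ∈ s ×ˢ s, a p.1 * conj (a p.2) * cexp (logGap ν p * I * t)).re := by
  rw [← ofReal_re (‖_‖ ^ 2), ofReal_pow, ← mul_conj', dirichletPoly, map_sum, sum_mul_sum,
    sum_product]
  congr 1
  refine sum_congr rfl fun i hi => sum_congr rfl fun k hk => ?_
  rw [logGap, ← natCast_cpow_mul_conj (hν i hi) (hν k hk), map_mul]
  ring

lemma integral_norm_dirichletPoly_sq (hν : ∀ i ∈ s, ν i ≠ 0) (α β : ℝ) :
    ∫ t in α..β, ‖dirichletPoly s ν a t‖ ^ 2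
      = (∑ p ∈ s ×ˢ s, a p.1 * conj (a p.2) * expIntegral (logGap ν p) α β).re := by
  simp_rw [norm_dirichletPoly_sq hν]
  rw [integral_re_eq_re_integral (by fun_prop), integral_sum_mul_exp]

lemma integral_norm_dirichletPoly_sq_add_right (hν : ∀ i ∈ s, ν i ≠ 0) (α β u : ℝ) :
    ∫ t in (α + u)..(β + u), ‖dirichletPoly s ν a t‖ ^ 2
      = (∑ p ∈ s ×ˢ s, a p.1 * conj (a p.2) * expIntegral (logGap ν p) α β
          * cexp (logGap ν p * I * u)).re := by
  simp_rw [integral_norm_dirichletPoly_sq hν, expIntegral_add_right, mul_comm (cexp _), mul_assoc]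

lemma continuous_integral_norm_dirichletPoly_sq_add_right (hν : ∀ i ∈ s, ν i ≠ 0)
    (α β : ℝ) : Continuous fun u : ℝ => ∫ t in (α + u)..(β + u), ‖dirichletPoly s ν a t‖ ^ 2 := by
  simp_rw [integral_norm_dirichletPoly_sq_add_right hν]
  fun_prop

lemma integral_integral_norm_dirichletPoly_sq (hν : ∀ i ∈ s, ν i ≠ 0) (α β H : ℝ) :
    ∫ u in (0 : ℝ)..H, ∫ t in (α + u)..(β + u), ‖dirichletPoly s ν a t‖ ^ 2
      = (∑ p ∈ s ×ˢ s, a p.1 * conj (a p.2)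
          * (expIntegral (logGap ν p) α β * expIntegral (logGap ν p) 0 H)).re := by
  simp_rw [integral_norm_dirichletPoly_sq_add_right hν, ← mul_assoc]
  rw [integral_re_eq_re_integral (by fun_prop), integral_sum_mul_exp]

end DirichletPolynomial

lemma abs_sub_le_mul_abs_log_sub {x y N : ℝ} (hx : 0 < x) (hy : 0 < y) (hxN : x ≤ N)
    (hyN : y ≤ N) : |x - y| ≤ N * |Real.log x - Real.log y| := by
  wlog hyx : y ≤ x generalizing x y
  · rw [abs_sub_comm, abs_sub_comm (Real.log x)]
    exact this hy hx hyN hxN (le_of_not_ge hyx)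
  have hlog := Real.one_sub_inv_le_log_of_pos (div_pos hx hy)
  rw [inv_div, Real.log_div hx.ne' hy.ne'] at hlog
  have hlog0 : 0 ≤ Real.log x - Real.log y := sub_nonneg.2 (Real.log_le_log hy hyx)
  rw [abs_of_nonneg (sub_nonneg.2 hyx), abs_of_nonneg hlog0]
  calc x - y = x * (1 - y / x) := by field_simp
    _ ≤ x * (Real.log x - Real.log y) := by gcongr
    _ ≤ N * (Real.log x - Real.log y) := by gcongr

lemma sum_inv_sq_le_two {ι : Type*} {s : Finset ι} {g : ι → ℕ} (hg : Set.InjOn g s) :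
    ∑ k ∈ s, ((g k : ℝ) ^ 2)⁻¹ ≤ 2 := by
  classical
  -- a value `g k = 0` contributes `(0 ^ 2)⁻¹ = 0`
  rw [← sum_image (f := fun n : ℕ => ((n : ℝ) ^ 2)⁻¹) hg, ← sum_erase (a := 0) _ (by simp)]
  calc _ ≤ ∑ k ∈ Ioo 0 ((s.image g).sup id + 1), ((k : ℝ) ^ 2)⁻¹ := by
        refine sum_le_sum_of_subset_of_nonneg (fun k hk => ?_) (fun _ _ _ => by positivity)
        have hk' := le_sup (f := id) (mem_of_mem_erase hk)
        have := ne_of_mem_erase hk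
        simp only [id, mem_Ioo] at hk' ⊢
        omega
    _ ≤ 2 / ((0 : ℕ) + 1) := sum_Ioo_inv_sq_le _ _
    _ = 2 := by norm_num

lemma sum_inv_sq_sub_le_four {ι : Type*} {s : Finset ι} {ν : ι → ℕ} (hν : Set.InjOn ν s)
    (i : ι) : ∑ k ∈ s, (((ν k : ℝ) - ν i) ^ 2)⁻¹ ≤ 4 := by
  have hdist : ∀ k, (((ν k : ℝ) - ν i) ^ 2)⁻¹ = (((((ν k : ℤ) - ν i).natAbs : ℕ) : ℝ) ^ 2)⁻¹ := by
    intro k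
    rw [Nat.cast_natAbs, Int.cast_abs, sq_abs]
    push_cast
    ring
  have hinj : ∀ t ⊆ s, (∀ k ∈ t, ∀ k' ∈ t, (ν k < ν i ↔ ν k' < ν i)) →
      Set.InjOn (fun k => ((ν k : ℤ) - ν i).natAbs) t := by
    intro t ht hside k hk k' hk' hkk'
    have := hside k hk k' hk'
    exact hν (ht hk) (ht hk') (by simp only at hkk'; omega)
  simp_rw [hdist]
  rw [← sum_filter_add_sum_filter_not s (fun k => ν k < ν i)]
  have hlt := sum_inv_sq_le_two (hinj (s.filter fun k => ν k < ν i) (filter_subset _ s)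
    fun k hk k' hk' => by simp only [mem_filter] at hk hk'; tauto)
  have hge := sum_inv_sq_le_two (hinj (s.filter fun k => ¬ν k < ν i) (filter_subset _ s)
    fun k hk k' hk' => by simp only [mem_filter] at hk hk'; tauto)
  linarith

lemma sum_offDiag_mul_mul_le {ι : Type*} {s : Finset ι} {x : ι → ℝ} {K : ι → ι → ℝ} {B : ℝ}
    (hK : ∀ i ∈ s, ∀ k ∈ s, 0 ≤ K i k) (hsymm : ∀ i ∈ s, ∀ k ∈ s, K i k = K k i)
    (hrow : ∀ i ∈ s, ∑ k ∈ s, K i k ≤ B) :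
    ∑ p ∈ s.offDiag, x p.1 * x p.2 * K p.1 p.2 ≤ B * ∑ i ∈ s, x i ^ 2 := by
  have hswap : ∑ i ∈ s, ∑ k ∈ s, x k ^ 2 * K i k = ∑ i ∈ s, ∑ k ∈ s, x i ^ 2 * K i k := by
    rw [sum_comm]
    exact sum_congr rfl fun i hi => sum_congr rfl fun k hk => by rw [hsymm k hk i hi]
  calc ∑ p ∈ s.offDiag, x p.1 * x p.2 * K p.1 p.2
      ≤ ∑ p ∈ s.offDiag, (x p.1 ^ 2 + x p.2 ^ 2) / 2 * K p.1 p.2 := by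
        refine sum_le_sum fun p hp => ?_
        obtain ⟨hi, hk, -⟩ := mem_offDiag.1 hp
        have := hK _ hi _ hk
        nlinarith [sq_nonneg (x p.1 - x p.2)]
    _ ≤ ∑ p ∈ s ×ˢ s, (x p.1 ^ 2 + x p.2 ^ 2) / 2 * K p.1 p.2 := by
        refine sum_le_sum_of_subset_of_nonneg
          (fun p hp => mem_product.2 ⟨(mem_offDiag.1 hp).1, (mem_offDiag.1 hp).2.1⟩)
          fun p hp _ => ?_
        obtain ⟨hi, hk⟩ := mem_product.1 hp
        have := hK _ hi _ hk
        positivity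
    _ = (∑ i ∈ s, ∑ k ∈ s, x i ^ 2 * K i k + ∑ i ∈ s, ∑ k ∈ s, x k ^ 2 * K i k) / 2 := by
        simp only [sum_product, ← sum_add_distrib, sum_div]
        exact sum_congr rfl fun i _ => sum_congr rfl fun k _ => by ring
    _ = ∑ i ∈ s, x i ^ 2 * ∑ k ∈ s, K i k := by
        rw [hswap, add_self_div_two]
        simp only [mul_sum]
    _ ≤ ∑ i ∈ s, x i ^ 2 * B := sum_le_sum fun i hi => by gcongr; exact hrow i hi
    _ = B * ∑ i ∈ s, x i ^ 2 := by rw [mul_sum]; simp only [mul_comm]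

section MeanValue

variable {ι : Type*} {s : Finset ι} {ν : ι → ℕ} {a : ι → ℂ} {N : ℝ}

lemma continuous_dirichletPoly (hν : ∀ i ∈ s, ν i ≠ 0) : Continuous (dirichletPoly s ν a) :=
  continuous_finsetSum _ fun i hi => continuous_const.mul
    ((by fun_prop : Continuous fun t : ℝ => -(I * t)).const_cpow
      (Or.inl (Nat.cast_ne_zero.2 (hν i hi))))

lemma logGap_ne_zero (hinj : Set.InjOn ν s) (hν : ∀ i ∈ s, ν i ≠ 0) {p : ι × ι}
    (hp : p ∈ s.offDiag) : logGap ν p ≠ 0 := by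
  obtain ⟨h1, h2, h12⟩ := mem_offDiag.1 hp
  refine sub_ne_zero.2 fun h => h12 (hinj h1 h2 ?_)
  have := Real.log_injOn_pos (Set.mem_Ioi.2 (Nat.cast_pos.2 (Nat.pos_of_ne_zero (hν _ h2))))
    (Set.mem_Ioi.2 (Nat.cast_pos.2 (Nat.pos_of_ne_zero (hν _ h1)))) h
  exact_mod_cast this.symm

lemma inv_logGap_sq_le (hinj : Set.InjOn ν s) (hν : ∀ i ∈ s, ν i ≠ 0)
    (hle : ∀ i ∈ s, (ν i : ℝ) ≤ N) {p : ι × ι} (hp : p ∈ s.offDiag) :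
    (logGap ν p ^ 2)⁻¹ ≤ N ^ 2 * (((ν p.2 : ℝ) - ν p.1) ^ 2)⁻¹ := by
  obtain ⟨h1, h2, h12⟩ := mem_offDiag.1 hp
  have hgap := abs_sub_le_mul_abs_log_sub (Nat.cast_pos.2 (Nat.pos_of_ne_zero (hν _ h2)))
    (Nat.cast_pos.2 (Nat.pos_of_ne_zero (hν _ h1))) (hle _ h2) (hle _ h1)
  have hd : (ν p.2 : ℝ) - ν p.1 ≠ 0 :=
    sub_ne_zero.2 fun h => h12 (hinj h1 h2 (by exact_mod_cast h.symm))
  have hl := logGap_ne_zero hinj hν hp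
  unfold logGap at hl ⊢
  have hsq : ((ν p.2 : ℝ) - ν p.1) ^ 2 ≤ N ^ 2 * (Real.log (ν p.2) - Real.log (ν p.1)) ^ 2 := by
    simpa only [mul_pow, sq_abs] using pow_le_pow_left₀ (abs_nonneg _) hgap 2
  rw [← div_eq_mul_inv, inv_eq_one_div, div_le_div_iff₀ (by positivity) (by positivity)]
  linarith

lemma norm_sum_offDiag_le (hinj : Set.InjOn ν s) (hν : ∀ i ∈ s, ν i ≠ 0)
    (hle : ∀ i ∈ s, (ν i : ℝ) ≤ N) {F : ι × ι → ℂ}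
    (hF : ∀ p ∈ s.offDiag, ‖F p‖ ≤ 4 * (logGap ν p ^ 2)⁻¹) :
    ‖∑ p ∈ s.offDiag, a p.1 * conj (a p.2) * F p‖ ≤ 16 * N ^ 2 * ∑ i ∈ s, ‖a i‖ ^ 2 := by
  set K : ι → ι → ℝ := fun i k => (((ν k : ℝ) - ν i) ^ 2)⁻¹
  have hK : ∀ i ∈ s, ∀ k ∈ s, 0 ≤ K i k := fun i _ k _ => by positivity
  have hsymm : ∀ i ∈ s, ∀ k ∈ s, K i k = K k i := fun i _ k _ => by simp only [K]; ring
  calc ‖∑ p ∈ s.offDiag, a p.1 * conj (a p.2) * F p‖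
      ≤ ∑ p ∈ s.offDiag, ‖a p.1‖ * ‖a p.2‖ * (4 * N ^ 2 * K p.1 p.2) := by
        refine norm_sum_le_of_le _ fun p hp => ?_
        rw [norm_mul, norm_mul, RCLike.norm_conj, mul_assoc 4]
        gcongr
        exact (hF p hp).trans (by gcongr; exact inv_logGap_sq_le hinj hν hle hp)
    _ = 4 * N ^ 2 * ∑ p ∈ s.offDiag, ‖a p.1‖ * ‖a p.2‖ * K p.1 p.2 := by
        rw [mul_sum]; exact sum_congr rfl fun p _ => by ring
    _ ≤ 4 * N ^ 2 * (4 * ∑ i ∈ s, ‖a i‖ ^ 2) := by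
        gcongr
        exact sum_offDiag_mul_mul_le (x := fun i => ‖a i‖) hK hsymm fun i _ =>
          sum_inv_sq_sub_le_four hinj i
    _ = 16 * N ^ 2 * ∑ i ∈ s, ‖a i‖ ^ 2 := by ring

lemma abs_integral_integral_norm_dirichletPoly_sq_sub_le [DecidableEq ι]
    (hinj : Set.InjOn ν s) (hν : ∀ i ∈ s, ν i ≠ 0) (hle : ∀ i ∈ s, (ν i : ℝ) ≤ N)
    (α β H : ℝ) :
    |(∫ u in (0 : ℝ)..H, ∫ t in (α + u)..(β + u), ‖dirichletPoly s ν a t‖ ^ 2)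
      - H * (β - α) * ∑ i ∈ s, ‖a i‖ ^ 2| ≤ 16 * N ^ 2 * ∑ i ∈ s, ‖a i‖ ^ 2 := by
  have hdiag : ∑ p ∈ s.diag, a p.1 * conj (a p.2)
      * (expIntegral (logGap ν p) α β * expIntegral (logGap ν p) 0 H)
        = ((H * (β - α) * ∑ i ∈ s, ‖a i‖ ^ 2 : ℝ) : ℂ) := by
    simp only [sum_diag, logGap, sub_self, expIntegral_zero, mul_conj', mul_sum]
    push_cast
    exact sum_congr rfl fun i _ => by ring
  rw [integral_integral_norm_dirichletPoly_sq hν, ← diag_union_offDiag,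
    sum_union (disjoint_diag_offDiag s), hdiag, add_re, ofReal_re, add_sub_cancel_left]
  refine (abs_re_le_norm _).trans (norm_sum_offDiag_le hinj hν hle fun p hp => ?_)
  have hl := logGap_ne_zero hinj hν hp
  calc ‖expIntegral (logGap ν p) α β * expIntegral (logGap ν p) 0 H‖
      ≤ 2 / |logGap ν p| * (2 / |logGap ν p|) := by
        rw [norm_mul]
        exact mul_le_mul (norm_expIntegral_le hl _ _) (norm_expIntegral_le hl _ _)
          (norm_nonneg _) (by positivity)
    _ = 4 * (logGap ν p ^ 2)⁻¹ := by
        rw [div_mul_div_comm, abs_mul_abs_self]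
        ring

theorem abs_integral_norm_dirichletPoly_sq_sub_le (hinj : Set.InjOn ν s)
    (hν : ∀ i ∈ s, ν i ≠ 0) (hle : ∀ i ∈ s, (ν i : ℝ) ≤ N) (hN : 0 < N) {α β : ℝ}
    (hαβ : α + N ≤ β) :
    |(∫ t in α..β, ‖dirichletPoly s ν a t‖ ^ 2) - (β - α) * ∑ i ∈ s, ‖a i‖ ^ 2|
      ≤ 17 * N * ∑ i ∈ s, ‖a i‖ ^ 2 := by
  classical
  have hf : Continuous fun t => ‖dirichletPoly s ν a t‖ ^ 2 :=
    (continuous_dirichletPoly hν).norm.pow 2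
  have hmono : ∀ {x y x' y' : ℝ}, x' ≤ x → x ≤ y → y ≤ y' →
      ∫ t in x..y, ‖dirichletPoly s ν a t‖ ^ 2 ≤ ∫ t in x'..y', ‖dirichletPoly s ν a t‖ ^ 2 :=
    fun h₁ h₂ h₃ => integral_mono_interval h₁ h₂ h₃
      (Filter.Eventually.of_forall fun _ => sq_nonneg _) (hf.intervalIntegrable _ _)
  have hconst : N * ∫ t in α..β, ‖dirichletPoly s ν a t‖ ^ 2
      = ∫ _ in (0 : ℝ)..N, ∫ t in α..β, ‖dirichletPoly s ν a t‖ ^ 2 := by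
    simp
  have hshift : ∀ x y : ℝ, IntervalIntegrable
      (fun u => ∫ t in (x + u)..(y + u), ‖dirichletPoly s ν a t‖ ^ 2) MeasureTheory.volume 0 N :=
    fun x y => (continuous_integral_norm_dirichletPoly_sq_add_right hν x y).intervalIntegrable _ _
  have hupper : N * ∫ t in α..β, ‖dirichletPoly s ν a t‖ ^ 2
      ≤ ∫ u in (0 : ℝ)..N, ∫ t in (α - N + u)..(β + u), ‖dirichletPoly s ν a t‖ ^ 2 := by
    rw [hconst]
    exact integral_mono_on hN.le intervalIntegrable_const (hshift _ _) fun u hu =>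
      hmono (by linarith [hu.1, hu.2]) (by linarith) (by linarith [hu.1, hu.2])
  have hlower : ∫ u in (0 : ℝ)..N, ∫ t in (α + u)..(β - N + u), ‖dirichletPoly s ν a t‖ ^ 2
      ≤ N * ∫ t in α..β, ‖dirichletPoly s ν a t‖ ^ 2 := by
    rw [hconst]
    exact integral_mono_on hN.le (hshift _ _) intervalIntegrable_const fun u hu =>
      hmono (by linarith [hu.1, hu.2]) (by linarith) (by linarith [hu.1, hu.2])
  have h₁ := abs_le.1 (abs_integral_integral_norm_dirichletPoly_sq_sub_le (a := a) hinj hν hle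
    (α - N) β N)
  have h₂ := abs_le.1 (abs_integral_integral_norm_dirichletPoly_sq_sub_le (a := a) hinj hν hle
    α (β - N) N)
  refine abs_le.2 ⟨le_of_mul_le_mul_left ?_ hN, le_of_mul_le_mul_left ?_ hN⟩ <;> nlinarith

end MeanValue

lemma abs_average_norm_dirichletPoly_sq_sub_le {ι : Type*} {s : Finset ι} {ν : ι → ℕ}
    {a : ι → ℂ} {N T : ℝ} (hinj : Set.InjOn ν s) (hν : ∀ i ∈ s, ν i ≠ 0)
    (hle : ∀ i ∈ s, (ν i : ℝ) ≤ N) (hN : 0 < N) (hNT : N ≤ T) :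
    |(1 / T) * (∫ t in T..(2 * T), ‖dirichletPoly s ν a t‖ ^ 2) - ∑ i ∈ s, ‖a i‖ ^ 2|
      ≤ 17 * N / T * ∑ i ∈ s, ‖a i‖ ^ 2 := by
  have hT : 0 < T := hN.trans_le hNT
  have h := abs_integral_norm_dirichletPoly_sq_sub_le (a := a) hinj hν hle hN
    (by linarith : T + N ≤ 2 * T)
  rw [show 2 * T - T = T by ring] at h
  rw [one_div_mul_eq_div, div_sub' hT.ne', abs_div, abs_of_pos hT, div_le_iff₀ hT]
  exact h.trans_eq (by field_simp)

lemma natCast_prod_cpow {ι : Type*} (s : Finset ι) (f : ι → ℕ) (z : ℂ) :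
    ((∏ i ∈ s, f i : ℕ) : ℂ) ^ z = ∏ i ∈ s, (f i : ℂ) ^ z := by
  classical
  induction s using Finset.induction_on with
  | empty => simp
  | insert i s hi ih =>
    rw [prod_insert hi, prod_insert hi, Nat.cast_mul, natCast_mul_natCast_cpow, ih]

section Products

variable {κ : Type*} [Fintype κ] [DecidableEq κ] {S : κ → Finset ℕ} {a : κ → ℕ → ℂ}

lemma prod_norm_dirichletPoly_sq (t : ℝ) :
    ∏ j, ‖dirichletPoly (S j) id (a j) t‖ ^ 2
      = ‖dirichletPoly (Fintype.piFinset S) (fun f => ∏ j, f j) (fun f => ∏ j, a j (f j)) t‖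
          ^ 2 := by
  rw [prod_pow, ← norm_prod]
  simp only [dirichletPoly, prod_univ_sum, prod_mul_distrib, natCast_prod_cpow, id]

lemma sum_norm_prod_sq :
    ∑ f ∈ Fintype.piFinset S, ‖∏ j, a j (f j)‖ ^ 2 = ∏ j, ∑ n ∈ S j, ‖a j n‖ ^ 2 := by
  simp only [prod_univ_sum, norm_prod, prod_pow]

lemma injOn_prod_piFinset (hcop : ∀ i j, i ≠ j → ∀ m ∈ S i, ∀ n ∈ S j, Nat.Coprime m n) :
    Set.InjOn (fun f : κ → ℕ => ∏ j, f j) (Fintype.piFinset S) := by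
  have hdvd : ∀ f ∈ Fintype.piFinset S, ∀ g ∈ Fintype.piFinset S,
      ∏ j, f j = ∏ j, g j → ∀ j, f j ∣ g j := by
    intro f hf g hg h j
    rw [Fintype.mem_piFinset] at hf hg
    have hfg : f j ∣ g j * ∏ i ∈ univ.erase j, g i := by
      rw [mul_prod_erase _ _ (mem_univ j), ← h]
      exact dvd_prod_of_mem _ (mem_univ j)
    exact (Nat.Coprime.prod_right fun i hi =>
      hcop j i (ne_of_mem_erase hi).symm _ (hf j) _ (hg i)).dvd_of_dvd_mul_right hfg
  intro f hf g hg h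
  funext j
  exact Nat.dvd_antisymm (hdvd f hf g hg h j) (hdvd g hg f hf h.symm j)

lemma le_of_forall_prod_le {N : ℝ} (hne : ∀ j, (S j).Nonempty) (hpos : ∀ j, ∀ n ∈ S j, 0 < n)
    (hN : ∀ f : κ → ℕ, (∀ j, f j ∈ S j) → ((∏ j, f j : ℕ) : ℝ) ≤ N) {j : κ} {n : ℕ}
    (hn : n ∈ S j) : (n : ℝ) ≤ N := by
  choose g hg using hne
  have hf : ∀ i, Function.update g j n i ∈ S i := fun i => by
    rcases eq_or_ne i j with rfl | h
    · simpa using hn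
    · simpa [h] using hg i
  refine le_trans ?_ (hN _ hf)
  exact_mod_cast Nat.le_of_dvd (prod_pos fun i _ => hpos i _ (hf i))
    (by simpa using dvd_prod_of_mem (Function.update g j n) (mem_univ j))

end Products

lemma exists_abs_le_one_add_pow_eq {r : ℕ} {δ ρ : ℝ} (hδ : 0 ≤ δ) (h₁ : (1 - δ) ^ r ≤ ρ)
    (h₂ : ρ ≤ (1 + δ) ^ r) : ∃ c, |c| ≤ δ ∧ (1 + c) ^ r = ρ := by
  obtain ⟨c, hc, hcρ⟩ := intermediate_value_Icc (neg_le_self hδ)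
    (f := fun c : ℝ => (1 + c) ^ r) (by fun_prop : Continuous _).continuousOn
    ⟨by simpa [sub_eq_add_neg] using h₁, h₂⟩
  exact ⟨c, abs_le.2 hc, hcρ⟩

lemma exists_eq_one_add_zpow_mul_prod {κ : Type*} [Fintype κ] (hκ : 2 ≤ Fintype.card κ)
    {e v : ℝ} {u D : κ → ℝ} (he : 0 < e) (he' : e ≤ 1 / 5) (hu : ∀ j, |u j - D j| ≤ e * D j)
    (hv : |v - ∏ j, D j| ≤ e * ∏ j, D j) :
    ∃ c, |c| ≤ 4 * e ∧ v = (1 + c) ^ ((1 : ℤ) - Fintype.card κ) * ∏ j, u j := by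
  have hD : ∀ j, 0 ≤ D j := fun j => (mul_nonneg_iff_of_pos_left he).1 ((abs_nonneg _).trans (hu j))
  obtain ⟨j, hj⟩ | h0 := (em (∃ j, D j = 0)).imp_right not_exists.1
  · have huj : u j = 0 := by simpa [hj] using hu j
    have hv0 : v = 0 := by simpa [prod_eq_zero (mem_univ j) hj] using hv
    exact ⟨0, by simpa using he.le, by rw [hv0, prod_eq_zero (mem_univ j) huj, mul_zero]⟩
  have hP : 0 < ∏ j, D j := prod_pos fun j _ => (hD j).lt_of_ne' (h0 j)
  have hu₀ : ∀ j, (1 - e) * D j ≤ u j := fun j => by linarith [(abs_le.1 (hu j)).1]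
  have hU₀ : (1 - e) ^ Fintype.card κ * ∏ j, D j ≤ ∏ j, u j := by
    rw [← card_univ, ← prod_const, ← prod_mul_distrib]
    exact prod_le_prod (fun j _ => mul_nonneg (by linarith) (hD j)) fun j _ => hu₀ j
  have hU₁ : ∏ j, u j ≤ (1 + e) ^ Fintype.card κ * ∏ j, D j := by
    rw [← card_univ, ← prod_const, ← prod_mul_distrib]
    exact prod_le_prod (fun j _ => (mul_nonneg (by linarith) (hD j)).trans (hu₀ j))
      fun j _ => by linarith [(abs_le.1 (hu j)).2]
  have hv₀ : 0 < v := by nlinarith [(abs_le.1 hv).1]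
  have hv₁ : v ≤ (1 + e) * ∏ j, D j := by linarith [(abs_le.1 hv).2]
  obtain ⟨r, hr⟩ : ∃ r, Fintype.card κ = r + 2 := ⟨Fintype.card κ - 2, by omega⟩
  rw [hr] at hU₀ hU₁ ⊢
  have hpow₀ : (1 - 4 * e) ^ (r + 1) * (1 + e) ≤ (1 - e) ^ (r + 2) :=
    calc (1 - 4 * e) ^ (r + 1) * (1 + e) = (1 - 4 * e) ^ r * ((1 - 4 * e) * (1 + e)) := by ring
      _ ≤ (1 - e) ^ r * (1 - e) ^ 2 :=
        mul_le_mul (pow_le_pow_left₀ (by linarith) (by linarith) r) (by nlinarith) (by nlinarith)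
          (pow_nonneg (by linarith) r)
      _ = (1 - e) ^ (r + 2) := by ring
  have hpow₁ : (1 + e) ^ (r + 2) ≤ (1 + 4 * e) ^ (r + 1) * (1 - e) :=
    calc (1 + e) ^ (r + 2) = (1 + e) ^ r * (1 + e) ^ 2 := by ring
      _ ≤ (1 + 4 * e) ^ r * ((1 + 4 * e) * (1 - e)) :=
        mul_le_mul (pow_le_pow_left₀ (by linarith) (by linarith) r) (by nlinarith) (by positivity)
          (by positivity)
      _ = (1 + 4 * e) ^ (r + 1) * (1 - e) := by ring
  have hρ₀ : (1 - 4 * e) ^ (r + 1) ≤ (∏ j, u j) / v := by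
    have h4e : 0 ≤ (1 - 4 * e) ^ (r + 1) := pow_nonneg (by linarith) _
    rw [le_div_iff₀ hv₀]
    calc (1 - 4 * e) ^ (r + 1) * v ≤ (1 - 4 * e) ^ (r + 1) * ((1 + e) * ∏ j, D j) :=
          mul_le_mul_of_nonneg_left hv₁ h4e
      _ ≤ (1 - e) ^ (r + 2) * ∏ j, D j := by
          rw [← mul_assoc]; exact mul_le_mul_of_nonneg_right hpow₀ hP.le
      _ ≤ ∏ j, u j := hU₀
  have hρ₁ : (∏ j, u j) / v ≤ (1 + 4 * e) ^ (r + 1) := by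
    rw [div_le_iff₀ hv₀]
    calc ∏ j, u j ≤ (1 + e) ^ (r + 2) * ∏ j, D j := hU₁
      _ ≤ (1 + 4 * e) ^ (r + 1) * ((1 - e) * ∏ j, D j) := by
          rw [← mul_assoc]; exact mul_le_mul_of_nonneg_right hpow₁ hP.le
      _ ≤ (1 + 4 * e) ^ (r + 1) * v := by gcongr; linarith [(abs_le.1 hv).1]
  obtain ⟨c, hc, hcρ⟩ := exists_abs_le_one_add_pow_eq (by positivity) hρ₀ hρ₁
  refine ⟨c, hc, ?_⟩
  rw [show (1 : ℤ) - ((r + 2 : ℕ) : ℤ) = -((r + 1 : ℕ) : ℤ) by push_cast; ring, zpow_neg,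
    zpow_natCast, hcρ, inv_div,
    div_mul_cancel₀ _ ((mul_pos (pow_pos (by linarith) _) hP).trans_le hU₀).ne']

theorem exists_average_prod_norm_dirichletPoly_sq_eq {κ : Type*} [Fintype κ] [DecidableEq κ]
    (hκ : 2 ≤ Fintype.card κ) {S : κ → Finset ℕ} (a : κ → ℕ → ℂ) {T N : ℝ} (hN : 0 < N)
    (hNT : 85 * N ≤ T) (hpos : ∀ j, ∀ n ∈ S j, 0 < n)
    (hcop : ∀ i j, i ≠ j → ∀ m ∈ S i, ∀ n ∈ S j, Nat.Coprime m n)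
    (hprod : ∀ f : κ → ℕ, (∀ j, f j ∈ S j) → ((∏ j, f j : ℕ) : ℝ) ≤ N) :
    ∃ c, |c| ≤ 68 * N / T ∧
      (1 / T) * (∫ t in T..(2 * T), ∏ j, ‖dirichletPoly (S j) id (a j) t‖ ^ 2)
        = (1 + c) ^ ((1 : ℤ) - Fintype.card κ) *
          ∏ j, ((1 / T) * ∫ t in T..(2 * T), ‖dirichletPoly (S j) id (a j) t‖ ^ 2) := by
  have hT : 0 < T := by linarith
  obtain ⟨j, hj⟩ | hne := (em (∃ j, S j = ∅)).imp_right not_exists.1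
  · have h0 : ∀ t, ‖dirichletPoly (S j) id (a j) t‖ ^ 2 = 0 := by simp [dirichletPoly, hj]
    refine ⟨0, by rw [abs_zero]; positivity, ?_⟩
    rw [integral_congr (g := 0) fun t _ => prod_eq_zero (mem_univ j) (h0 t),
      prod_eq_zero (mem_univ j) (by simp [h0])]
    simp
  have hle : ∀ j, ∀ n ∈ S j, (n : ℝ) ≤ N := fun j n hn =>
    le_of_forall_prod_le (fun i => nonempty_iff_ne_empty.2 (hne i)) hpos hprod hn
  have hfactor := fun j => abs_average_norm_dirichletPoly_sq_sub_le (a := a j) (T := T)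
    (Set.injOn_id _) (fun n hn => (hpos j n hn).ne') (hle j) hN (by linarith)
  have hproduct := abs_average_norm_dirichletPoly_sq_sub_le (a := fun f => ∏ j, a j (f j))
    (T := T) (injOn_prod_piFinset hcop)
    (fun f hf => (prod_pos fun j _ => hpos j _ (Fintype.mem_piFinset.1 hf j)).ne')
    (fun f hf => hprod f (Fintype.mem_piFinset.1 hf)) hN (by linarith)
  rw [sum_norm_prod_sq] at hproduct
  simp_rw [prod_norm_dirichletPoly_sq]
  obtain ⟨c, hc, hsplit⟩ := exists_eq_one_add_zpow_mul_prod hκ (by positivity)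
    (by rw [div_le_iff₀ hT]; linarith) hfactor hproduct
  exact ⟨c, hc.trans_eq (by ring), hsplit⟩

/-- Splitting of mean values of products of Dirichlet polynomials with pairwise coprime
supports: if all products `n₁⋯n_R` (with `n_j ∈ S_j`) are at most `N`, then
`(1/T)∫_T^{2T} ∏_j |A_j(it)|² dt = (1+O(N/T))^{1−R} ∏_j (1/T)∫_T^{2T}|A_j(it)|² dt`. -/
theorem coprime_dirichlet_polynomial_splitting :
    ∃ C : ℝ, 0 < C ∧ ∀ (T N : ℝ) (R : ℕ) (S : Fin R → Finset ℕ) (a : Fin R → ℕ → ℂ),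
      0 < T → 0 < N → C * N / T < 1 →
      (∀ j, ∀ n ∈ S j, 0 < n) →
      (∀ i j, i ≠ j → ∀ m ∈ S i, ∀ n ∈ S j, Nat.Coprime m n) →
      (∀ f : Fin R → ℕ, (∀ j, f j ∈ S j) → ((∏ j, f j : ℕ) : ℝ) ≤ N) →
      ∃ c : ℝ, |c| ≤ C * N / T ∧
        (1 / T) * (∫ t in T..(2 * T),
            ∏ j, ‖∑ n ∈ S j, a j n * (n : ℂ) ^ (-(Complex.I * (t : ℂ)))‖ ^ 2)
          = (1 + c) ^ ((1 : ℤ) - R) *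
            ∏ j, ((1 / T) * ∫ t in T..(2 * T),
              ‖∑ n ∈ S j, a j n * (n : ℂ) ^ (-(Complex.I * (t : ℂ)))‖ ^ 2) := by
  refine ⟨85, by norm_num, fun T N R S a hT hN hC hpos hcop hprod => ?_⟩
  obtain hR | hR := lt_or_ge R 2
  · refine ⟨0, by rw [abs_zero]; positivity, ?_⟩
    interval_cases R
    · simp
      field_simp
      ring
    · simp
  have hNT : 85 * N ≤ T := by rw [div_lt_one hT] at hC; linarith
  obtain ⟨c, hc, h⟩ := exists_average_prod_norm_dirichletPoly_sq_eq (by simpa using hR) a hN hNT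
    hpos hcop hprod
  refine ⟨c, hc.trans (by gcongr; norm_num), ?_⟩
  rw [Fintype.card_fin] at h
  exact h
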